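/- arXiv:1307.0357 — 2 statements merged into one kernel-verified Lean document; each statement's English description precedes it below -/
import Mathlib

section
/- For 0 < |q| < 1 and |t| < 1, Σ_{n≥0} t^n/(q;q)_n = 1/(t;q)_∞, where (t;q)_n = Π_{j=0}^{n-1}(1-q^j t) and (t;q)_∞ = Π_{j=0}^∞ (1-q^j t). -/
open Finset Filter Topology

/-!
Write `E(s) = ∑ sⁿ / (q;q)ₙ`. Comparing coefficients gives `(1 - s) E(s) = E(qs)`, and iterating,
`(s;q)_N E(s) = E(qᴺ s)`. As `N → ∞` the right side tends to `E(0) = 1` by dominated convergence,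
while `(s;q)_N → (s;q)_∞`; hence `(s;q)_∞ E(s) = 1`.
-/

variable {𝕜 : Type*} [NormedField 𝕜]

noncomputable def qPochhammerSelf (q : 𝕜) (n : ℕ) : 𝕜 := ∏ j ∈ Icc 1 n, (1 - q ^ j)

noncomputable def qExp (q s : 𝕜) : 𝕜 := ∑' n, s ^ n / qPochhammerSelf q n

@[simp]
lemma qPochhammerSelf_zero (q : 𝕜) : qPochhammerSelf q 0 = 1 := by
  simp [qPochhammerSelf]

lemma qPochhammerSelf_succ (q : 𝕜) (n : ℕ) :
    qPochhammerSelf q (n + 1) = qPochhammerSelf q n * (1 - q ^ (n + 1)) :=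
  prod_Icc_succ_top (Nat.le_add_left 1 n) _

lemma one_sub_pow_ne_zero {q : 𝕜} (hq : ‖q‖ < 1) {j : ℕ} (hj : j ≠ 0) : 1 - q ^ j ≠ 0 := by
  rw [sub_ne_zero]
  intro h
  have := congrArg norm h
  rw [norm_one, norm_pow] at this
  exact (pow_lt_one₀ (norm_nonneg q) hq hj).ne' this

lemma qPochhammerSelf_ne_zero {q : 𝕜} (hq : ‖q‖ < 1) (n : ℕ) : qPochhammerSelf q n ≠ 0 :=
  prod_ne_zero_iff.2 fun j hj => one_sub_pow_ne_zero hq (by grind)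

lemma norm_pow_mul_le {q : 𝕜} (hq : ‖q‖ < 1) (n : ℕ) (s : 𝕜) : ‖q ^ n * s‖ ≤ ‖s‖ := by
  rw [norm_mul, norm_pow]
  exact mul_le_of_le_one_left (norm_nonneg s) (pow_le_one₀ (norm_nonneg q) hq.le)

lemma pow_succ_div_qPochhammerSelf_succ {q : 𝕜} (hq : ‖q‖ < 1) (s : 𝕜) (n : ℕ) :
    s ^ (n + 1) / qPochhammerSelf q (n + 1) =
      s / (1 - q ^ (n + 1)) * (s ^ n / qPochhammerSelf q n) := by
  rw [qPochhammerSelf_succ, pow_succ]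
  field_simp [qPochhammerSelf_ne_zero hq n, one_sub_pow_ne_zero hq n.succ_ne_zero]

-- Ratio test: consecutive terms have ratio `s / (1 - q ^ (n + 1)) → s`.
lemma summable_norm_pow_div_qPochhammerSelf {q s : 𝕜} (hq : ‖q‖ < 1) (hs : ‖s‖ < 1) :
    Summable fun n => ‖s ^ n / qPochhammerSelf q n‖ := by
  obtain ⟨r, hsr, hr⟩ := exists_between hs
  have hratio : Tendsto (fun n : ℕ => ‖s / (1 - q ^ (n + 1))‖) atTop (𝓝 ‖s / (1 - 0)‖) :=
    (tendsto_const_nhds.div (tendsto_const_nhds.sub ((tendsto_add_atTop_iff_nat 1).2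
      (tendsto_pow_atTop_nhds_zero_of_norm_lt_one hq))) (by simp)).norm
  rw [sub_zero, div_one] at hratio
  refine summable_of_ratio_norm_eventually_le hr ?_
  filter_upwards [hratio.eventually (ge_mem_nhds hsr)] with n hn
  rw [norm_norm, norm_norm, pow_succ_div_qPochhammerSelf_succ hq, norm_mul]
  exact mul_le_mul_of_nonneg_right hn (norm_nonneg _)

variable [CompleteSpace 𝕜]

lemma summable_pow_div_qPochhammerSelf {q s : 𝕜} (hq : ‖q‖ < 1) (hs : ‖s‖ < 1) :
    Summable fun n => s ^ n / qPochhammerSelf q n :=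
  (summable_norm_pow_div_qPochhammerSelf hq hs).of_norm

lemma one_sub_mul_qExp {q s : 𝕜} (hq : ‖q‖ < 1) (hs : ‖s‖ < 1) :
    (1 - s) * qExp q s = qExp q (q * s) := by
  have hqs : ‖q * s‖ < 1 := by simpa using (norm_pow_mul_le hq 1 s).trans_lt hs
  have hsum := summable_pow_div_qPochhammerSelf hq hs
  have hshift : HasSum
      (fun n => s ^ n / qPochhammerSelf q n - (q * s) ^ n / qPochhammerSelf q n)
      (s * qExp q s) := by
    refine (hasSum_nat_add_iff' 1).1 ?_
    simp only [range_one, sum_singleton, pow_zero, sub_self, sub_zero]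
    refine (hsum.hasSum.mul_left s).congr_fun fun n => ?_
    rw [qPochhammerSelf_succ]
    field_simp [qPochhammerSelf_ne_zero hq n, one_sub_pow_ne_zero hq n.succ_ne_zero]
    ring
  have hdiff : qExp q s - qExp q (q * s) = s * qExp q s :=
    (hsum.hasSum.sub (summable_pow_div_qPochhammerSelf hq hqs).hasSum).unique hshift
  linear_combination hdiff

lemma prod_range_mul_qExp {q s : 𝕜} (hq : ‖q‖ < 1) (hs : ‖s‖ < 1) (N : ℕ) :
    (∏ j ∈ range N, (1 - q ^ j * s)) * qExp q s = qExp q (q ^ N * s) := by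
  induction N with
  | zero => simp
  | succ N ih =>
    rw [prod_range_succ, mul_right_comm, ih, mul_comm,
      one_sub_mul_qExp hq ((norm_pow_mul_le hq N s).trans_lt hs), ← mul_assoc, ← pow_succ']

lemma tendsto_qExp_pow_mul {q s : 𝕜} (hq : ‖q‖ < 1) (hs : ‖s‖ < 1) :
    Tendsto (fun N => qExp q (q ^ N * s)) atTop (𝓝 1) := by
  have hlim : Tendsto (fun N => qExp q (q ^ N * s)) atTop
      (𝓝 (∑' n, (0 : 𝕜) ^ n / qPochhammerSelf q n)) := by
    refine tendsto_tsum_of_dominated_convergence (summable_norm_pow_div_qPochhammerSelf hq hs)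
      (fun n => ?_) (Eventually.of_forall fun N n => ?_)
    · have := (tendsto_pow_atTop_nhds_zero_of_norm_lt_one hq).mul_const s
      rw [zero_mul] at this
      exact (this.pow n).div_const _
    · rw [norm_div, norm_div, norm_pow, norm_pow]
      gcongr
      exact norm_pow_mul_le hq N s
  rwa [tsum_eq_single 0 (fun n hn => by simp [hn]), pow_zero, qPochhammerSelf_zero,
    div_one] at hlim

lemma multipliable_one_sub_pow_mul {q : 𝕜} (hq : ‖q‖ < 1) (s : 𝕜) :
    Multipliable fun j => 1 - q ^ j * s := by
  simpa [sub_eq_add_neg] using multipliable_one_add_of_summable (f := fun j => -(q ^ j * s))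
    (by simpa [norm_pow] using (summable_geometric_of_lt_one (norm_nonneg q) hq).mul_right ‖s‖)

theorem qExp_eq_inv_tprod {q s : 𝕜} (hq : ‖q‖ < 1) (hs : ‖s‖ < 1) :
    qExp q s = (∏' j, (1 - q ^ j * s))⁻¹ := by
  have hpartial := ((multipliable_one_sub_pow_mul hq s).hasProd.tendsto_prod_nat).mul_const
    (qExp q s)
  simp only [prod_range_mul_qExp hq hs] at hpartial
  exact eq_inv_of_mul_eq_one_right (tendsto_nhds_unique hpartial (tendsto_qExp_pow_mul hq hs))

theorem q_exp_eulerian_general {q t : ℝ} (hq1 : |q| < 1) (ht : |t| < 1) :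
    ∑' n : ℕ, t ^ n / ∏ j ∈ Finset.Icc 1 n, (1 - q ^ j) =
      (∏' j : ℕ, (1 - q ^ j * t))⁻¹ :=
  qExp_eq_inv_tprod hq1 ht

/-- For `0 < |q| < 1` and `|t| < 1`: `Σ_{n≥0} tⁿ/(q;q)_n = 1/(t;q)_∞`. -/
theorem q_exp_eulerian {q t : ℝ} (hq0 : 0 < |q|) (hq1 : |q| < 1) (ht : |t| < 1) :
    ∑' n : ℕ, t ^ n / ∏ j ∈ Finset.Icc 1 n, (1 - q ^ j) =
      (∏' j : ℕ, (1 - q ^ j * t))⁻¹ :=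
  q_exp_eulerian_general hq1 ht
end

section
/- (Carlitz inversion) For sequences (a(n)), (b(n)): if b(n) = Σ_{k=0}^{⌊n/2⌋} [n choose k]_q s^k a(n-2k) for all n, then a(n) = Σ_{k=0}^{⌊n/2⌋} q^{k(k-1)/2} ([n]_q/[n-k]_q) [n-k choose k]_q (-s)^k b(n-2k) for all n, and conversely. -/
open Finset

/-- The q-analogue `[n]_q = (1-q^n)/(1-q)`. -/
noncomputable def qNum {F : Type*} [Field F] (q : F) (n : ℕ) : F := (1 - q ^ n) / (1 - q)

/-- The q-factorial `[n]_q! = [1]_q [2]_q ⋯ [n]_q`. -/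
noncomputable def qFact {F : Type*} [Field F] (q : F) (n : ℕ) : F :=
  ∏ j ∈ Finset.Icc 1 n, qNum q j

/-- The q-binomial (Gaussian) coefficient `[n choose k]_q = [n]_q!/([k]_q! [n-k]_q!)`,
zero when `k > n`. -/
noncomputable def qBinom {F : Type*} [Field F] (q : F) (n k : ℕ) : F :=
  if k ≤ n then qFact q n / (qFact q k * qFact q (n - k)) else 0

/-!
Both sums are transforms `a ↦ (n ↦ ∑ₖ w n k * a (n - 2k))` with `w n 0 = 1`; such a
transform is injective (it is unitriangular), so it suffices to show that the Carlitz
transform is a left inverse of the q-binomial one. Composing the two gives the weights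
`∑ₖ carlitzWeight n k * [n-2k, m-k] s^(m-k)`; by trinomial revision and absorption the
`k`-th term is `[n]/[m] s^m (-1)^k q^(k choose 2) [m,k] [n-1-k, m-1]`, and for `m ≥ 1` this
alternating sum vanishes: one q-Pascal step turns it into the same sum with `m` and the
degree `m - 1` both lowered by one, down to `1 - 1 = 0`.
-/

section QBinom

variable {F : Type*} [Field F] {q : F}

lemma qNum_zero : qNum q 0 = 0 := by
  simp [qNum]

lemma qFact_zero : qFact q 0 = 1 := by
  simp [qFact]

lemma qFact_succ (n : ℕ) : qFact q (n + 1) = qFact q n * qNum q (n + 1) :=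
  prod_Icc_succ_top (by omega) _

lemma qBinom_of_lt {n k : ℕ} (h : n < k) : qBinom q n k = 0 :=
  if_neg (by omega)

lemma qBinom_add_left (k j : ℕ) :
    qBinom q (k + j) k = qFact q (k + j) / (qFact q k * qFact q j) := by
  rw [qBinom, if_pos (by omega), Nat.add_sub_cancel_left]

variable (hq : ∀ j : ℕ, 1 ≤ j → q ^ j ≠ 1)
include hq

lemma one_sub_ne_zero_of_pow_ne_one : (1 : F) - q ≠ 0 :=
  sub_ne_zero.mpr (by simpa [eq_comm] using hq 1 le_rfl)

lemma qNum_ne_zero {j : ℕ} (hj : 1 ≤ j) : qNum q j ≠ 0 :=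
  div_ne_zero (sub_ne_zero.mpr (hq j hj).symm) (one_sub_ne_zero_of_pow_ne_one hq)

lemma qFact_ne_zero (n : ℕ) : qFact q n ≠ 0 :=
  prod_ne_zero_iff.mpr fun _ hj ↦ qNum_ne_zero hq (mem_Icc.mp hj).1

lemma qNum_add (i j : ℕ) : qNum q (i + j) = qNum q i + q ^ i * qNum q j := by
  have := one_sub_ne_zero_of_pow_ne_one hq
  simp only [qNum, pow_add]
  field_simp
  ring

lemma qBinom_zero_right (n : ℕ) : qBinom q n 0 = 1 := by
  simp [qBinom, qFact_zero, qFact_ne_zero hq]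

lemma qBinom_self (n : ℕ) : qBinom q n n = 1 := by
  simp [qBinom, qFact_zero, qFact_ne_zero hq]

lemma qNum_mul_qBinom_succ_succ (n k : ℕ) :
    qNum q (k + 1) * qBinom q (n + 1) (k + 1) = qNum q (n + 1) * qBinom q n k := by
  rcases lt_or_ge n k with h | h
  · simp [qBinom_of_lt h, qBinom_of_lt (show n + 1 < k + 1 by omega)]
  obtain ⟨j, rfl⟩ := Nat.exists_eq_add_of_le h
  rw [show k + j + 1 = (k + 1) + j by omega, qBinom_add_left, qBinom_add_left,
    qFact_succ k, show k + 1 + j = (k + j) + 1 by omega, qFact_succ (k + j)]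
  have := qFact_ne_zero hq k
  have := qFact_ne_zero hq j
  have := qNum_ne_zero hq (j := k + 1) (by omega)
  field_simp

lemma qNum_mul_qBinom_succ (n k : ℕ) :
    qNum q (k + 1) * qBinom q n (k + 1) = qNum q (n - k) * qBinom q n k := by
  rcases lt_trichotomy n k with h | rfl | h
  · simp [qBinom_of_lt h, qBinom_of_lt (show n < k + 1 by omega)]
  · simp [qBinom_of_lt (Nat.lt_succ_self n), qNum_zero]
  obtain ⟨j, rfl⟩ := Nat.exists_eq_add_of_lt h
  rw [show k + j + 1 = (k + 1) + j by omega, qBinom_add_left,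
    show k + 1 + j = k + (j + 1) by omega, qBinom_add_left, show k + (j + 1) - k = j + 1 by omega,
    qFact_succ k, qFact_succ j]
  have := qFact_ne_zero hq k
  have := qFact_ne_zero hq j
  have := qNum_ne_zero hq (j := k + 1) (by omega)
  have := qNum_ne_zero hq (j := j + 1) (by omega)
  field_simp

lemma qBinom_succ_succ (n k : ℕ) :
    qBinom q (n + 1) (k + 1) = qBinom q n (k + 1) + q ^ (n - k) * qBinom q n k := by
  rcases lt_or_ge n k with h | h
  · simp [qBinom_of_lt h, qBinom_of_lt (show n < k + 1 by omega),
      qBinom_of_lt (show n + 1 < k + 1 by omega)]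
  refine mul_left_cancel₀ (qNum_ne_zero hq (j := k + 1) (by omega)) ?_
  have hsplit := qNum_add hq (n - k) (k + 1)
  rw [show n - k + (k + 1) = n + 1 by omega] at hsplit
  linear_combination qNum_mul_qBinom_succ_succ hq n k - qNum_mul_qBinom_succ hq n k +
    qBinom q n k * hsplit

lemma qBinom_succ_succ' (n k : ℕ) :
    qBinom q (n + 1) (k + 1) = q ^ (k + 1) * qBinom q n (k + 1) + qBinom q n k := by
  rcases lt_or_ge n k with h | h
  · simp [qBinom_of_lt h, qBinom_of_lt (show n < k + 1 by omega),
      qBinom_of_lt (show n + 1 < k + 1 by omega)]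
  refine mul_left_cancel₀ (qNum_ne_zero hq (j := k + 1) (by omega)) ?_
  have hsplit := qNum_add hq (k + 1) (n - k)
  rw [show k + 1 + (n - k) = n + 1 by omega] at hsplit
  linear_combination qNum_mul_qBinom_succ_succ hq n k - q ^ (k + 1) * qNum_mul_qBinom_succ hq n k +
    qBinom q n k * hsplit

lemma qBinom_mul_qBinom {n k j : ℕ} (h : k + j ≤ n) :
    qBinom q n k * qBinom q (n - k) j = qBinom q n (k + j) * qBinom q (k + j) k := by
  obtain ⟨i, rfl⟩ := Nat.exists_eq_add_of_le h
  rw [show k + j + i = k + (j + i) by omega, qBinom_add_left, Nat.add_sub_cancel_left,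
    qBinom_add_left, show k + (j + i) = (k + j) + i by omega, qBinom_add_left, qBinom_add_left]
  have := qFact_ne_zero hq k
  have := qFact_ne_zero hq j
  have := qFact_ne_zero hq i
  have := qFact_ne_zero hq (k + j)
  have := qFact_ne_zero hq (j + i)
  field_simp

lemma sum_alternating_qBinom_succ (p : ℕ) (f : ℕ → F) :
    ∑ k ∈ range (p + 2), (-1) ^ k * q ^ k.choose 2 * qBinom q (p + 1) k * f k =
      ∑ k ∈ range (p + 1),
        (-1) ^ k * q ^ k.choose 2 * qBinom q p k * (f k - q ^ p * f (k + 1)) := by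
  have hshift : ∀ k ∈ range (p + 1),
      (-1) ^ (k + 1) * q ^ (k + 1).choose 2 * qBinom q (p + 1) (k + 1) * f (k + 1) =
        (-1) ^ (k + 1) * q ^ (k + 1).choose 2 * qBinom q p (k + 1) * f (k + 1) -
          q ^ p * ((-1) ^ k * q ^ k.choose 2 * qBinom q p k * f (k + 1)) := by
    intro k hk
    have hpow : q ^ (k.choose 2 + k) * q ^ (p - k) = q ^ k.choose 2 * q ^ p := by
      rw [← pow_add, ← pow_add]
      congr 1
      have := mem_range.mp hk
      omega
    have hchoose : (k + 1).choose 2 = k.choose 2 + k := by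
      rw [Nat.choose_succ_succ', Nat.choose_one_right, add_comm]
    rw [qBinom_succ_succ hq, hchoose]
    linear_combination -((-1) ^ k * qBinom q p k * f (k + 1)) * hpow
  have hunshift : ∑ k ∈ range (p + 1), (-1) ^ k * q ^ k.choose 2 * qBinom q p k * f k =
      ∑ k ∈ range (p + 1),
          (-1) ^ (k + 1) * q ^ (k + 1).choose 2 * qBinom q p (k + 1) * f (k + 1) + f 0 := by
    have h := sum_range_succ' (fun k ↦ (-1) ^ k * q ^ k.choose 2 * qBinom q p k * f k) (p + 1)
    rw [sum_range_succ, qBinom_of_lt (Nat.lt_succ_self p)] at h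
    simpa [qBinom_zero_right hq] using h
  rw [sum_range_succ', sum_congr rfl hshift]
  simp only [mul_sub, sum_sub_distrib, hunshift, ← mul_sum, mul_left_comm _ (q ^ p)]
  simp only [qBinom_zero_right hq, Nat.choose_zero_succ, pow_zero, one_mul, mul_one]
  ring

lemma sum_alternating_qBinom_mul_qBinom_eq_zero (r : ℕ) {M : ℕ} (hM : r < M) :
    ∑ k ∈ range (r + 2),
      (-1) ^ k * q ^ k.choose 2 * qBinom q (r + 1) k * qBinom q (M - k) r = 0 := by
  induction r generalizing M with
  | zero => simp [sum_range_succ, qBinom_zero_right hq, qBinom_self hq]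
  | succ r ih =>
    rw [sum_alternating_qBinom_succ hq, ← ih (M := M - 1) (by omega)]
    refine sum_congr rfl fun k hk ↦ ?_
    have hk := mem_range.mp hk
    rw [show M - k = (M - 1 - k) + 1 by omega, qBinom_succ_succ' hq,
      show M - (k + 1) = M - 1 - k by omega]
    ring

end QBinom

section StepTwoTransform

variable {R : Type*} [Semiring R]

def stepTwoTransform (w : ℕ → ℕ → R) (a : ℕ → R) (n : ℕ) : R :=
  ∑ k ∈ range (n / 2 + 1), w n k * a (n - 2 * k)

lemma stepTwoTransform_comp (u w : ℕ → ℕ → R) (a : ℕ → R) :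
    stepTwoTransform u (stepTwoTransform w a) =
      stepTwoTransform (fun n m ↦ ∑ k ∈ range (m + 1), u n k * w (n - 2 * k) (m - k)) a := by
  funext n
  simp only [stepTwoTransform, mul_sum, sum_mul]
  calc
    _ = ∑ k ∈ range (n / 2 + 1), ∑ j ∈ range (n / 2 + 1 - k),
          u n k * (w (n - 2 * k) j * a (n - 2 * k - 2 * j)) :=
      sum_congr rfl fun k hk ↦ by
        rw [show (n - 2 * k) / 2 + 1 = n / 2 + 1 - k by have := mem_range.mp hk; omega]
    _ = ∑ m ∈ range (n / 2 + 1), ∑ k ∈ range (m + 1),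
          u n k * (w (n - 2 * k) (m - k) * a (n - 2 * k - 2 * (m - k))) :=
      (sum_range_diag_flip _ _).symm
    _ = _ := sum_congr rfl fun m hm ↦ sum_congr rfl fun k hk ↦ by
        have := mem_range.mp hm
        rw [show n - 2 * k - 2 * (m - k) = n - 2 * m by have := mem_range.mp hk; omega, mul_assoc]

lemma stepTwoTransform_eq_self {w : ℕ → ℕ → R} (h0 : ∀ n, w n 0 = 1)
    (hpos : ∀ n m, 0 < m → 2 * m ≤ n → w n m = 0) (a : ℕ → R) :
    stepTwoTransform w a = a := by
  funext n
  rw [stepTwoTransform, sum_range_succ', sum_eq_zero fun m hm ↦ by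
    rw [hpos n (m + 1) m.succ_pos (by have := mem_range.mp hm; omega), zero_mul]]
  simp [h0]

lemma stepTwoTransform_injective [IsLeftCancelAdd R] {w : ℕ → ℕ → R}
    (h0 : ∀ n, w n 0 = 1) :
    Function.Injective (stepTwoTransform w) := by
  intro x y hxy
  funext n
  induction n using Nat.strong_induction_on with
  | _ n ih =>
    have h := congr_fun hxy n
    simp only [stepTwoTransform, sum_range_succ', h0, one_mul, Nat.mul_zero, Nat.sub_zero] at h
    have hlower : ∑ k ∈ range (n / 2), w n (k + 1) * x (n - 2 * (k + 1)) =
        ∑ k ∈ range (n / 2), w n (k + 1) * y (n - 2 * (k + 1)) :=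
      sum_congr rfl fun k hk ↦ by rw [ih _ (by have := mem_range.mp hk; omega)]
    rw [hlower] at h
    exact add_left_cancel h

end StepTwoTransform

noncomputable def carlitzWeight {F : Type*} [Field F] (q s : F) (n k : ℕ) : F :=
  q ^ (k * (k - 1) / 2) * (if k = 0 then 1 else qNum q n / qNum q (n - k)) *
    qBinom q (n - k) k * (-s) ^ k

section Carlitz

variable {F : Type*} [Field F] {q : F} (hq : ∀ j : ℕ, 1 ≤ j → q ^ j ≠ 1) (s : F)
include hq

lemma carlitzWeight_zero_right (n : ℕ) : carlitzWeight q s n 0 = 1 := by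
  simp [carlitzWeight, qBinom_zero_right hq]

lemma sum_carlitzWeight_mul_qBinom_eq_zero {n m : ℕ} (hm : 0 < m) (hmn : 2 * m ≤ n) :
    ∑ k ∈ range (m + 1), carlitzWeight q s n k * (qBinom q (n - 2 * k) (m - k) * s ^ (m - k)) =
      0 := by
  have hterm : ∀ k ∈ range (m + 1),
      carlitzWeight q s n k * (qBinom q (n - 2 * k) (m - k) * s ^ (m - k)) =
        qNum q n / qNum q m * s ^ m *
          ((-1) ^ k * q ^ k.choose 2 * qBinom q m k * qBinom q (n - 1 - k) (m - 1)) := by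
    intro k hk
    have hk := Nat.lt_succ_iff.mp (mem_range.mp hk)
    have hm0 := qNum_ne_zero hq (j := m) hm
    have hnk0 := qNum_ne_zero hq (j := n - k) (by omega)
    have hif : (if k = 0 then 1 else qNum q n / qNum q (n - k)) = qNum q n / qNum q (n - k) := by
      split_ifs with h
      · rw [h, Nat.sub_zero, div_self (qNum_ne_zero hq (by omega))]
      · rfl
    have htri := qBinom_mul_qBinom hq (n := n - k) (k := k) (j := m - k) (by omega)
    rw [show n - k - k = n - 2 * k by omega, show k + (m - k) = m by omega] at htri
    have habs := qNum_mul_qBinom_succ_succ hq (n - 1 - k) (m - 1)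
    rw [show m - 1 + 1 = m by omega, show n - 1 - k + 1 = n - k by omega] at habs
    have hs : s ^ k * s ^ (m - k) = s ^ m := by rw [← pow_add, Nat.add_sub_cancel' hk]
    rw [carlitzWeight, hif, ← Nat.choose_two_right]
    field_simp
    linear_combination (q ^ k.choose 2 * qNum q n * qBinom q m k * (-1) ^ k * s ^ m) * habs +
      (q ^ k.choose 2 * qNum q n * qNum q m * (-1) ^ k) *
        (qBinom q (n - k) k * qBinom q (n - 2 * k) (m - k) * hs + s ^ m * htri)
  have hvanish := sum_alternating_qBinom_mul_qBinom_eq_zero hq (m - 1) (M := n - 1) (by omega)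
  rw [Nat.sub_add_cancel hm, show m - 1 + 2 = m + 1 by omega] at hvanish
  rw [sum_congr rfl hterm, ← mul_sum, hvanish, mul_zero]

lemma stepTwoTransform_carlitzWeight_qBinom (a : ℕ → F) :
    stepTwoTransform (carlitzWeight q s) (stepTwoTransform (fun n k ↦ qBinom q n k * s ^ k) a) =
      a := by
  rw [stepTwoTransform_comp]
  refine stepTwoTransform_eq_self (fun n ↦ ?_) (fun n m hm hmn ↦ ?_) a
  · simp [carlitzWeight_zero_right hq, qBinom_zero_right hq]
  · exact sum_carlitzWeight_mul_qBinom_eq_zero hq s hm hmn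

end Carlitz

/-- Carlitz inversion: `b(n) = Σ_{k≤n/2} [n choose k]_q s^k a(n-2k)` for all `n`
iff `a(n) = Σ_{k≤n/2} q^{k(k-1)/2} ([n]_q/[n-k]_q) [n-k choose k]_q (-s)^k b(n-2k)`
for all `n`.  (The ratio `[n]_q/[n-k]_q` equals `1` when `k = 0`.) -/
theorem carlitz_inversion {F : Type*} [Field F] (q : F)
    (hq : ∀ j : ℕ, 1 ≤ j → q ^ j ≠ 1) (s : F) (a b : ℕ → F) :
    (∀ n : ℕ, b n = ∑ k ∈ Finset.range (n / 2 + 1),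
        qBinom q n k * s ^ k * a (n - 2 * k)) ↔
    (∀ n : ℕ, a n = ∑ k ∈ Finset.range (n / 2 + 1),
        q ^ (k * (k - 1) / 2) * (if k = 0 then 1 else qNum q n / qNum q (n - k)) *
          qBinom q (n - k) k * (-s) ^ k * b (n - 2 * k)) := by
  set B := stepTwoTransform fun n k ↦ qBinom q n k * s ^ k
  set C := stepTwoTransform (carlitzWeight q s)
  have hCB : Function.LeftInverse C B := stepTwoTransform_carlitzWeight_qBinom hq s
  have hBC : Function.RightInverse C B :=
    hCB.rightInverse_of_injective (stepTwoTransform_injective (carlitzWeight_zero_right hq s))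
  change (∀ n, b n = B a n) ↔ ∀ n, a n = C b n
  simp only [← funext_iff]
  constructor
  · rintro rfl
    exact (hCB a).symm
  · rintro rfl
    exact (hBC b).symm
end
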